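/- Let C be a Tor-∏-orthogonal left R-module and X : ⋯ → P₁ → P₀ → C₋₁ → C₋₂ → ⋯ an exact complex with all Pᵢ projective and all C_j ∈ Add_R(C), such that X ⊗-exactness holds with respect to Prod_R(C⁺) (i.e., Y ⊗_R X is exact for all Y ∈ Prod_R(C⁺)). Then every kernel K_j = Ker(C_j → C_{j-1}) is a projectively coresolved G_C-flat module. -/

import Mathlib

open CategoryTheory CategoryTheory.Limits

set_option autoImplicit false

universe u

variable {R : Type u} [CommRing R]

/-- A short exact sequence of `R`-modules encoded by two linear maps. -/
def IsSES {A B C : ModuleCat.{u} R} (f : A →ₗ[R] B) (g : B →ₗ[R] C) : Prop :=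
  Function.Injective f ∧ Function.Exact f g ∧ Function.Surjective g

/-- `Add_R(C)`: direct summands of direct sums of copies of `C`. -/
def AddClass (C : ModuleCat.{u} R) : ModuleCat.{u} R → Prop := fun M =>
  ∃ (ι : Type u) (s : M →ₗ[R] (ι →₀ C)) (p : (ι →₀ C) →ₗ[R] M), p ∘ₗ s = LinearMap.id

/-- `Prod_R(C)`: direct summands of direct products of copies of `C`. -/
def ProdClass (C : ModuleCat.{u} R) : ModuleCat.{u} R → Prop := fun M =>
  ∃ (ι : Type u) (s : M →ₗ[R] (ι → C)) (p : (ι → C) →ₗ[R] M), p ∘ₗ s = LinearMap.id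

/-- The character module `C⁺ = Hom_ℤ(C, ℚ/ℤ)` as an `R`-module. -/
noncomputable def charM (C : ModuleCat.{u} R) : ModuleCat.{u} R :=
  ModuleCat.of R (CharacterModule C)

/-- `C` is Tor-∏-orthogonal: `Tor^R_i((C⁺)^I, C) = 0` for all `i ≥ 1` and all sets `I`. -/
def TorProdOrthogonal (C : ModuleCat.{u} R) : Prop :=
  ∀ (I : Type u) (i : ℕ), 1 ≤ i →
    Limits.IsZero (((Tor (ModuleCat.{u} R) i).obj
      (ModuleCat.of R (I → CharacterModule C))).obj C)

/-- A totally acyclic complex `⋯ → P₁ → P₀ → A₀ → A₁ → ⋯` with the `Pᵢ` projective,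
the `Aⱼ` in `Add_R(C)`, which stays exact after `Y ⊗_R -` for `Y ∈ Prod_R(C⁺)`. -/
structure PGCFComplex (C : ModuleCat.{u} R) where
  P : ℕ → ModuleCat.{u} R
  A : ℕ → ModuleCat.{u} R
  projP : ∀ n, Module.Projective R (P n)
  memA : ∀ n, AddClass C (A n)
  dP : ∀ n, P (n + 1) →ₗ[R] P n
  mid : P 0 →ₗ[R] A 0
  dA : ∀ n, A n →ₗ[R] A (n + 1)
  exact_P : ∀ n, Function.Exact (dP (n + 1)) (dP n)
  exact_mid : Function.Exact (dP 0) mid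
  exact_A0 : Function.Exact mid (dA 0)
  exact_A : ∀ n, Function.Exact (dA n) (dA (n + 1))
  tensor_exact : ∀ Y : ModuleCat.{u} R, ProdClass (charM C) Y →
    (∀ n, Function.Exact (LinearMap.lTensor Y (dP (n + 1))) (LinearMap.lTensor Y (dP n))) ∧
    Function.Exact (LinearMap.lTensor Y (dP 0)) (LinearMap.lTensor Y mid) ∧
    Function.Exact (LinearMap.lTensor Y mid) (LinearMap.lTensor Y (dA 0)) ∧
    ∀ n, Function.Exact (LinearMap.lTensor Y (dA n)) (LinearMap.lTensor Y (dA (n + 1)))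

/-- `M` is projectively coresolved `G_C`-flat. -/
def IsPGCF (C M : ModuleCat.{u} R) : Prop :=
  ∃ X : PGCFComplex C, Nonempty (M ≃ₗ[R] ↥(LinearMap.range X.mid))

/-!
Write `K n = ker (A n → A (n + 1))` and let `Y ∈ Prod_R(C⁺)`. Splicing a projective resolution of
`K n` with `A n → A (n + 1) → ⋯` gives a complex of the required shape. It stays exact under
`Y ⊗ -` as soon as `Tor_{≥1}(Y, K n) = 0`: at the splice point this uses that `Y ⊗ K n → Y ⊗ A n`
is injective with image `ker (Y ⊗ A n → Y ⊗ A (n + 1))`, which follows from the `Y ⊗ -`-exactness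
of `X` itself.

The vanishing of `Tor_{≥1}(Y, K n)` is proved by induction on `n`. The module `K 0` is resolved
by the projective half of `X`. For `A ∈ Add_R(C)`, `Tor_{≥1}(Y, A) = 0` because Tor commutes with
direct sums and passes to direct summands in both variables; then `K (n + 1) ≅ A n / K n` is
resolved by the mapping cone of a lift of `K n ↪ A n` to resolutions, whose `Y ⊗ -`-exactness
follows from that of the two resolutions and the injectivity of `Y ⊗ K n → Y ⊗ A n`.
-/

theorem exists_seq_of_exists_succ {α : ℕ → Type*} (p : ∀ n, α n → α (n + 1) → Prop)
    (a₀ : α 0) (a₁ : α 1) (h₀ : p 0 a₀ a₁) (step : ∀ n a b, p n a b → ∃ c, p (n + 1) b c) :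
    ∃ φ : ∀ n, α n, φ 0 = a₀ ∧ ∀ n, p n (φ n) (φ (n + 1)) := by
  let pairs : ∀ n, {ab : α n × α (n + 1) // p n ab.1 ab.2} := fun n =>
    Nat.rec ⟨(a₀, a₁), h₀⟩ (fun n ab => ⟨(ab.1.2, (step n _ _ ab.2).choose),
      (step n _ _ ab.2).choose_spec⟩) n
  exact ⟨fun n => (pairs n).1.1, rfl, fun n => (pairs n).2⟩

section LinearAlgebra

variable {M N P Q : Type*} [AddCommGroup M] [Module R M] [AddCommGroup N] [Module R N]
  [AddCommGroup P] [Module R P] [AddCommGroup Q] [Module R Q]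

theorem Module.Projective.exists_comp_eq_of_exact [Module.Projective R Q] {f : M →ₗ[R] N}
    {g : N →ₗ[R] P} (hfg : Function.Exact f g) (h : Q →ₗ[R] N) (hgh : g ∘ₗ h = 0) :
    ∃ h' : Q →ₗ[R] M, f ∘ₗ h' = h := by
  have hh : ∀ x, h x ∈ LinearMap.range f := fun x =>
    hfg.linearMap_ker_eq ▸ LinearMap.congr_fun hgh x
  obtain ⟨h', hh'⟩ := Module.projective_lifting_property f.rangeRestrict
    (h.codRestrict _ hh) f.surjective_rangeRestrict
  exact ⟨h', LinearMap.ext fun x => congr_arg Subtype.val (LinearMap.congr_fun hh' x)⟩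

theorem Function.Exact.codRestrict_ker {f : M →ₗ[R] N} {g : N →ₗ[R] P} {h : P →ₗ[R] Q}
    {hgh : ∀ y, h (g y) = 0} (hfg : Function.Exact f g) :
    Function.Exact f (g.codRestrict (LinearMap.ker h) hgh) :=
  (Submodule.injective_subtype _).comp_exact_iff_exact.mp hfg

theorem Function.Exact.surjective_codRestrict_ker {f : M →ₗ[R] N} {g : N →ₗ[R] P}
    (hfg : Function.Exact f g) :
    Function.Surjective (f.codRestrict (LinearMap.ker g) hfg.apply_apply_eq_zero) :=
  fun ⟨y, hy⟩ => ((hfg y).mp hy).imp fun _ hx => Subtype.ext hx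

theorem Function.Exact.of_ker_iff {f : M →ₗ[R] N} {g : N →ₗ[R] P} {g' : N →ₗ[R] Q}
    (hfg : Function.Exact f g) (h : ∀ y, g' y = 0 ↔ g y = 0) : Function.Exact f g' :=
  fun y => (h y).trans (hfg y)

theorem Function.Exact.finsuppMapRange {f : M →ₗ[R] N} {g : N →ₗ[R] P}
    (hfg : Function.Exact f g) (κ : Type*) :
    Function.Exact (Finsupp.mapRange.linearMap (α := κ) f) (Finsupp.mapRange.linearMap g) := by
  have hf : Finsupp.mapRange.linearMap (α := κ) f = Finsupp.mapRange.linearMap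
      (LinearMap.range f).subtype ∘ₗ Finsupp.mapRange.linearMap f.rangeRestrict := by
    rw [← Finsupp.mapRange.linearMap_comp]
    rfl
  have hsurj : LinearMap.range (Finsupp.mapRange.linearMap (α := κ) f.rangeRestrict) = ⊤ :=
    LinearMap.range_eq_top.mpr <|
      Finsupp.mapRange_surjective _ (map_zero _) f.surjective_rangeRestrict
  rw [LinearMap.exact_iff, Finsupp.ker_mapRange, hfg.linearMap_ker_eq, hf,
    LinearMap.range_comp_of_range_eq_top _ hsurj,
    Finsupp.range_mapRange_linearMap _ (Submodule.ker_subtype _), Submodule.range_subtype]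

end LinearAlgebra

section Cone

variable {Q₂ Q₁ Q₀ S₁ S₀ S : Type*} [AddCommGroup Q₂] [Module R Q₂] [AddCommGroup Q₁]
  [Module R Q₁] [AddCommGroup Q₀] [Module R Q₀] [AddCommGroup S₁] [Module R S₁]
  [AddCommGroup S₀] [Module R S₀] [AddCommGroup S] [Module R S]

def coneMap (a : Q₁ →ₗ[R] Q₀) (f : S₀ →ₗ[R] Q₀) (b : S₀ →ₗ[R] S) :
    Q₁ × S₀ →ₗ[R] Q₀ × S :=
  (a.coprod f).prod (-(b ∘ₗ LinearMap.snd R Q₁ S₀))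

@[simp]
theorem coneMap_apply (a : Q₁ →ₗ[R] Q₀) (f : S₀ →ₗ[R] Q₀) (b : S₀ →ₗ[R] S) (x : Q₁ × S₀) :
    coneMap a f b x = (a x.1 + f x.2, -b x.2) :=
  rfl

variable {a₂ : Q₂ →ₗ[R] Q₁} {a₁ : Q₁ →ₗ[R] Q₀} {b₁ : S₁ →ₗ[R] S₀} {b₀ : S₀ →ₗ[R] S}
  {f₁ : S₁ →ₗ[R] Q₁} {f₀ : S₀ →ₗ[R] Q₀}

theorem exact_coneMap (ha : Function.Exact a₂ a₁) (hb : Function.Exact b₁ b₀)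
    (hf : a₁ ∘ₗ f₁ = f₀ ∘ₗ b₁) :
    Function.Exact (coneMap a₂ f₁ b₁) (coneMap a₁ f₀ b₀) := by
  have hf' : ∀ z, a₁ (f₁ z) = f₀ (b₁ z) := LinearMap.congr_fun hf
  rintro ⟨x, y⟩
  simp only [coneMap_apply, Prod.mk_eq_zero, neg_eq_zero, Set.mem_range, Prod.exists,
    Prod.mk.injEq]
  constructor
  · rintro ⟨hxy, hy⟩
    obtain ⟨z, rfl⟩ := (hb y).mp hy
    obtain ⟨w, hw⟩ := (ha (x + f₁ z)).mp (by rw [map_add, hf', hxy])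
    exact ⟨w, -z, by rw [hw, map_neg, add_neg_cancel_right], by rw [map_neg, neg_neg]⟩
  · rintro ⟨w, z, rfl, rfl⟩
    refine ⟨?_, by rw [map_neg, neg_eq_zero, hb.apply_apply_eq_zero]⟩
    rw [map_add, ha.apply_apply_eq_zero, hf', map_neg, zero_add, add_neg_cancel]

/-- The second map is the cone differential `Q₁ × S₀ → Q₀ × K` with its `K`-component dropped;
nothing is lost, since for injective `ι` that component is determined by the `Q₀`-component. -/
theorem exact_coneMap_coprod {K A : Type*} [AddCommGroup K] [Module R K] [AddCommGroup A]
    [Module R A] {εq : Q₀ →ₗ[R] A} {εs : S₀ →ₗ[R] K} {ι : K →ₗ[R] A}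
    (ha : Function.Exact a₂ a₁) (hs : Function.Exact b₁ εs) (hεq : εq ∘ₗ a₁ = 0)
    (hι : Function.Injective ι) (hf : a₁ ∘ₗ f₁ = f₀ ∘ₗ b₁) (hf₀ : εq ∘ₗ f₀ = ι ∘ₗ εs) :
    Function.Exact (coneMap a₂ f₁ b₁) (a₁.coprod f₀) := by
  refine (exact_coneMap ha hs hf).of_ker_iff fun ⟨x, y⟩ => ?_
  simp only [LinearMap.coprod_apply, coneMap_apply, Prod.mk_eq_zero, neg_eq_zero,
    iff_self_and]
  intro hxy
  apply hι
  have hx : εq (a₁ x) = 0 := LinearMap.congr_fun hεq x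
  have h := congr_arg εq hxy
  rw [map_add, map_zero, hx, zero_add] at h
  rw [map_zero, ← LinearMap.comp_apply ι, ← hf₀, LinearMap.comp_apply, h]

theorem exact_coprod_comp {K A N : Type*} [AddCommGroup K] [Module R K] [AddCommGroup A]
    [Module R A] [AddCommGroup N] [Module R N] {εq : Q₀ →ₗ[R] A} {εs : S₀ →ₗ[R] K}
    {ι : K →ₗ[R] A} {π : A →ₗ[R] N} (hq : Function.Exact a₁ εq) (hs : Function.Surjective εs)
    (hιπ : Function.Exact ι π) (hf₀ : εq ∘ₗ f₀ = ι ∘ₗ εs) :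
    Function.Exact (a₁.coprod f₀) (π ∘ₗ εq) := by
  have hf₀' : ∀ z, εq (f₀ z) = ι (εs z) := LinearMap.congr_fun hf₀
  intro y
  simp only [LinearMap.comp_apply, Set.mem_range, Prod.exists, LinearMap.coprod_apply]
  constructor
  · intro hy
    obtain ⟨k, hk⟩ := (hιπ (εq y)).mp hy
    obtain ⟨z, rfl⟩ := hs k
    obtain ⟨x, hx⟩ := (hq (y - f₀ z)).mp (by rw [map_sub, hf₀', hk, sub_self])
    exact ⟨x, z, by rw [hx, sub_add_cancel]⟩
  · rintro ⟨x, z, rfl⟩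
    rw [map_add, hq.apply_apply_eq_zero, hf₀', zero_add, hιπ.apply_apply_eq_zero]

end Cone

section Tensor

variable (Y : Type*) [AddCommGroup Y] [Module R Y]
variable {M N P M' N' : Type*} [AddCommGroup M] [Module R M] [AddCommGroup N] [Module R N]
  [AddCommGroup P] [Module R P] [AddCommGroup M'] [Module R M'] [AddCommGroup N'] [Module R N']

theorem LinearMap.lTensor_coprod (f : M →ₗ[R] P) (g : N →ₗ[R] P) :
    lTensor Y (f.coprod g) =
      (lTensor Y f).coprod (lTensor Y g) ∘ₗ (TensorProduct.prodRight R R Y M N).toLinearMap :=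
  TensorProduct.ext' fun y x => by simp [TensorProduct.tmul_add]

theorem prodRight_comp_lTensor_coneMap (a : M' →ₗ[R] M) (f : N' →ₗ[R] M) (b : N' →ₗ[R] N) :
    (TensorProduct.prodRight R R Y M N).toLinearMap ∘ₗ LinearMap.lTensor Y (coneMap a f b) =
      coneMap (LinearMap.lTensor Y a) (LinearMap.lTensor Y f) (LinearMap.lTensor Y b) ∘ₗ
        (TensorProduct.prodRight R R Y M' N').toLinearMap :=
  TensorProduct.ext' fun y x => by simp [TensorProduct.tmul_add, TensorProduct.tmul_neg]

theorem finsuppRight_comp_lTensor_mapRange (κ : Type*) [DecidableEq κ] (f : M →ₗ[R] N) :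
    (TensorProduct.finsuppRight R R Y N κ).toLinearMap ∘ₗ
        LinearMap.lTensor Y (Finsupp.mapRange.linearMap f) =
      Finsupp.mapRange.linearMap (LinearMap.lTensor Y f) ∘ₗ
        (TensorProduct.finsuppRight R R Y M κ).toLinearMap := by
  have h : ∀ i : κ, Finsupp.lapply i ∘ₗ Finsupp.mapRange.linearMap f = f ∘ₗ Finsupp.lapply i :=
    fun i => LinearMap.ext fun x => by simp
  refine LinearMap.ext fun t => Finsupp.ext fun i => ?_
  simp only [LinearMap.comp_apply, LinearEquiv.coe_coe, TensorProduct.finsuppRight_apply,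
    Finsupp.mapRange.linearMap_apply, Finsupp.mapRange_apply]
  rw [← LinearMap.comp_apply, ← LinearMap.comp_apply, ← LinearMap.lTensor_comp,
    ← LinearMap.lTensor_comp, h]

theorem lTensor_subtype_ker_injective_and_exact {τ : M' →ₗ[R] M} {σ : M →ₗ[R] N}
    {δ : N →ₗ[R] P} (hστ : σ ∘ₗ τ = 0) (hσδ : Function.Exact σ δ)
    (h₁ : Function.Exact (LinearMap.lTensor Y τ) (LinearMap.lTensor Y σ))
    (h₂ : Function.Exact (LinearMap.lTensor Y σ) (LinearMap.lTensor Y δ)) :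
    Function.Injective (LinearMap.lTensor Y (LinearMap.ker δ).subtype) ∧
      Function.Exact (LinearMap.lTensor Y (LinearMap.ker δ).subtype) (LinearMap.lTensor Y δ) := by
  let π : M →ₗ[R] LinearMap.ker δ := σ.codRestrict _ hσδ.apply_apply_eq_zero
  have hπ : Function.Surjective (LinearMap.lTensor Y π) :=
    LinearMap.lTensor_surjective Y hσδ.surjective_codRestrict_ker
  have hπτ : π ∘ₗ τ = 0 := LinearMap.ext fun x => Subtype.ext (LinearMap.congr_fun hστ x)
  have hσ : σ = (LinearMap.ker δ).subtype ∘ₗ π := rfl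
  rw [hσ, LinearMap.lTensor_comp] at h₁ h₂
  refine ⟨(injective_iff_map_eq_zero _).mpr fun t ht => ?_, hπ.comp_exact_iff_exact.mp h₂⟩
  obtain ⟨s, rfl⟩ := hπ t
  obtain ⟨w, rfl⟩ := (h₁ s).mp ht
  rw [← LinearMap.comp_apply, ← LinearMap.lTensor_comp, hπτ, LinearMap.lTensor_zero,
    LinearMap.zero_apply]

end Tensor

/-- A projective resolution `⋯ → Q 1 → Q 0 → N → 0`, unbundled into linear maps. -/
structure ProjRes (N : ModuleCat.{u} R) : Type (u + 1) where
  Q : ℕ → ModuleCat.{u} R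
  projective : ∀ n, Module.Projective R (Q n)
  d : ∀ n, Q (n + 1) →ₗ[R] Q n
  ε : Q 0 →ₗ[R] N
  exact_d : ∀ n, Function.Exact (d (n + 1)) (d n)
  exact_ε : Function.Exact (d 0) ε
  surjective_ε : Function.Surjective ε

attribute [instance] ProjRes.projective

def TorAcyclic (Y N : ModuleCat.{u} R) : Prop :=
  ∀ n : ℕ, IsZero (((Tor (ModuleCat.{u} R) (n + 1)).obj Y).obj N)

namespace ProjRes

section

variable {N : ModuleCat.{u} R} (r : ProjRes N)

noncomputable def complex : ChainComplex (ModuleCat.{u} R) ℕ :=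
  ChainComplex.of r.Q (fun n => ModuleCat.ofHom (r.d n))
    (fun n => by ext x; exact (r.exact_d n).apply_apply_eq_zero x)

theorem complex_d (n : ℕ) : r.complex.d (n + 1) n = ModuleCat.ofHom (r.d n) :=
  ChainComplex.of_d r.Q (fun n => ModuleCat.ofHom (r.d n)) n

noncomputable def toProjectiveResolution : ProjectiveResolution N where
  complex := r.complex
  projective n := (IsProjective.iff_projective _).mp (r.projective n)
  π := (ChainComplex.toSingle₀Equiv _ _).symm ⟨ModuleCat.ofHom r.ε, by
    ext x; exact r.exact_ε.apply_apply_eq_zero x⟩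
  quasiIso := ⟨fun n => by
    rcases n with _ | n
    · rw [ChainComplex.quasiIsoAt₀_iff, ShortComplex.quasiIso_iff_of_zeros']
      · rw [ShortComplex.ShortExact.moduleCat_exact_iff_function_exact,
          ModuleCat.epi_iff_surjective]
        exact ⟨r.exact_ε, r.surjective_ε⟩
      all_goals rfl
    · rw [quasiIsoAt_iff_exactAt' _ _ (ChainComplex.exactAt_succ_single_obj _ _),
        HomologicalComplex.exactAt_iff' _ (n + 2) (n + 1) n (by simp) (by simp),
        ShortComplex.ShortExact.moduleCat_exact_iff_function_exact]
      change Function.Exact (r.complex.d (n + 2) (n + 1)).hom (r.complex.d (n + 1) n).hom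
      rw [complex_d, complex_d]
      exact r.exact_d n⟩

def TensorAcyclic (Y : ModuleCat.{u} R) : Prop :=
  ∀ n, Function.Exact (LinearMap.lTensor Y (r.d (n + 1))) (LinearMap.lTensor Y (r.d n))

theorem tensorAcyclic_iff_torAcyclic (Y : ModuleCat.{u} R) :
    r.TensorAcyclic Y ↔ TorAcyclic Y N := by
  refine forall_congr' fun n => ?_
  let F := (MonoidalCategory.tensoringLeft (ModuleCat.{u} R)).obj Y
  let K := (F.mapHomologicalComplex _).obj r.complex
  have hK : ∀ m, (K.d (m + 1) m).hom = LinearMap.lTensor Y (r.d m) := fun m => by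
    change (F.map (r.complex.d (m + 1) m)).hom = _
    rw [complex_d]
    rfl
  change _ ↔ IsZero ((F.leftDerived (n + 1)).obj N)
  rw [(r.toProjectiveResolution.isoLeftDerivedObj F (n + 1)).isZero_iff]
  change _ ↔ IsZero (K.homology (n + 1))
  rw [← HomologicalComplex.exactAt_iff_isZero_homology,
    HomologicalComplex.exactAt_iff' K (n + 2) (n + 1) n (by simp) (by simp),
    ShortComplex.ShortExact.moduleCat_exact_iff_function_exact]
  change _ ↔ Function.Exact (K.d (n + 2) (n + 1)).hom (K.d (n + 1) n).hom
  rw [hK, hK]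
  exact Iff.rfl

end

noncomputable def syzygy (N : ModuleCat.{u} R) : ℕ → ModuleCat.{u} R
  | 0 => N
  | n + 1 => ModuleCat.of R (LinearMap.ker (Finsupp.linearCombination R (id : syzygy N n → _)))

noncomputable def free (N : ModuleCat.{u} R) : ProjRes N where
  Q n := ModuleCat.of R (syzygy N n →₀ R)
  projective _ := inferInstance
  d n := (LinearMap.ker (Finsupp.linearCombination R id)).subtype ∘ₗ
    Finsupp.linearCombination R (id : syzygy N (n + 1) → _)
  ε := Finsupp.linearCombination R (id : syzygy N 0 → _)
  exact_d _ := (Submodule.injective_subtype _).comp_exact_iff_exact.mpr <|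
    (Finsupp.linearCombination_id_surjective R _).comp_exact_iff_exact.mpr <|
      LinearMap.exact_subtype_ker_map _
  exact_ε := (Finsupp.linearCombination_id_surjective R _).comp_exact_iff_exact.mpr <|
    LinearMap.exact_subtype_ker_map _
  surjective_ε := Finsupp.linearCombination_id_surjective R _

structure Hom {N N' : ModuleCat.{u} R} (r : ProjRes N) (t : ProjRes N') (g : N →ₗ[R] N') where
  f : ∀ n, r.Q n →ₗ[R] t.Q n
  comm_ε : t.ε ∘ₗ f 0 = g ∘ₗ r.ε
  comm : ∀ n, t.d n ∘ₗ f (n + 1) = f n ∘ₗ r.d n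

theorem nonempty_hom {N N' : ModuleCat.{u} R} (r : ProjRes N) (t : ProjRes N')
    (g : N →ₗ[R] N') : Nonempty (r.Hom t g) := by
  obtain ⟨u₀, hu₀⟩ := Module.projective_lifting_property t.ε (g ∘ₗ r.ε) t.surjective_ε
  obtain ⟨u₁, hu₁⟩ := Module.Projective.exists_comp_eq_of_exact t.exact_ε (u₀ ∘ₗ r.d 0) <| by
    rw [← LinearMap.comp_assoc, hu₀, LinearMap.comp_assoc, r.exact_ε.linearMap_comp_eq_zero,
      LinearMap.comp_zero]
  obtain ⟨f, rfl, hf⟩ := exists_seq_of_exists_succ (α := fun n => r.Q n →ₗ[R] t.Q n)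
    (fun n u v => t.d n ∘ₗ v = u ∘ₗ r.d n) u₀ u₁ hu₁ fun n u v huv =>
      Module.Projective.exists_comp_eq_of_exact (t.exact_d n) (v ∘ₗ r.d (n + 1)) <| by
        rw [← LinearMap.comp_assoc, huv, LinearMap.comp_assoc,
          (r.exact_d n).linearMap_comp_eq_zero, LinearMap.comp_zero]
  exact ⟨⟨f, hu₀, hf⟩⟩

noncomputable def finsupp {M : ModuleCat.{u} R} (r : ProjRes M) (κ : Type u) :
    ProjRes (ModuleCat.of R (κ →₀ M)) where
  Q n := ModuleCat.of R (κ →₀ r.Q n)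
  projective _ := by classical exact Module.Projective.of_equiv (finsuppLequivDFinsupp R).symm
  d n := Finsupp.mapRange.linearMap (r.d n)
  ε := Finsupp.mapRange.linearMap r.ε
  exact_d n := (r.exact_d n).finsuppMapRange κ
  exact_ε := r.exact_ε.finsuppMapRange κ
  surjective_ε := Finsupp.mapRange_surjective _ (map_zero _) r.surjective_ε

theorem TensorAcyclic.finsupp {M : ModuleCat.{u} R} {r : ProjRes M} {Y : ModuleCat.{u} R}
    (hr : r.TensorAcyclic Y) (κ : Type u) : (r.finsupp κ).TensorAcyclic Y := by
  classical
  intro n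
  exact (Function.Exact.iff_of_ladder_linearEquiv
    (finsuppRight_comp_lTensor_mapRange Y κ (r.d (n + 1))).symm
    (finsuppRight_comp_lTensor_mapRange Y κ (r.d n)).symm).mp ((hr n).finsuppMapRange κ)

variable {K A N : ModuleCat.{u} R}

def coneQ (rK : ProjRes K) (rA : ProjRes A) : ℕ → ModuleCat.{u} R
  | 0 => rA.Q 0
  | n + 1 => ModuleCat.of R (rA.Q (n + 1) × rK.Q n)

namespace Hom

variable {rK : ProjRes K} {rA : ProjRes A} {ι : K →ₗ[R] A} (φ : rK.Hom rA ι)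

def coneD : ∀ n, coneQ rK rA (n + 1) →ₗ[R] coneQ rK rA n
  | 0 => (rA.d 0).coprod (φ.f 0)
  | n + 1 => coneMap (rA.d (n + 1)) (φ.f (n + 1)) (rK.d n)

/-- The mapping cone of `φ`, with its bottom term `K` removed, resolves `N ≅ A / K`. -/
def cone (π : A →ₗ[R] N) (hι : Function.Injective ι) (hιπ : Function.Exact ι π)
    (hπ : Function.Surjective π) : ProjRes N where
  Q := coneQ rK rA
  projective
    | 0 => rA.projective 0
    | n + 1 => inferInstanceAs (Module.Projective R (rA.Q (n + 1) × rK.Q n))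
  d := φ.coneD
  ε := π ∘ₗ rA.ε
  exact_d
    | 0 => exact_coneMap_coprod (rA.exact_d 0) rK.exact_ε rA.exact_ε.linearMap_comp_eq_zero hι
        (φ.comm 0) φ.comm_ε
    | n + 1 => exact_coneMap (rA.exact_d (n + 1)) (rK.exact_d n) (φ.comm (n + 1))
  exact_ε := exact_coprod_comp rA.exact_ε rK.surjective_ε hιπ φ.comm_ε
  surjective_ε := hπ.comp rA.surjective_ε

theorem cone_tensorAcyclic (π : A →ₗ[R] N) (hι : Function.Injective ι)
    (hιπ : Function.Exact ι π) (hπ : Function.Surjective π) {Y : ModuleCat.{u} R}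
    (hK : rK.TensorAcyclic Y) (hA : rA.TensorAcyclic Y)
    (hιY : Function.Injective (LinearMap.lTensor Y ι)) :
    (φ.cone π hι hιπ hπ).TensorAcyclic Y := by
  have comm : ∀ n, LinearMap.lTensor Y (rA.d n) ∘ₗ LinearMap.lTensor Y (φ.f (n + 1)) =
      LinearMap.lTensor Y (φ.f n) ∘ₗ LinearMap.lTensor Y (rK.d n) := fun n => by
    rw [← LinearMap.lTensor_comp, ← LinearMap.lTensor_comp, φ.comm]
  rintro (_ | n)
  · refine (Function.Exact.iff_of_ladder_linearEquiv (e₃ := LinearEquiv.refl R _)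
      (prodRight_comp_lTensor_coneMap Y _ _ _).symm
      (LinearMap.lTensor_coprod Y _ _).symm).mp ?_
    have hε : LinearMap.lTensor Y rA.ε ∘ₗ LinearMap.lTensor Y (rA.d 0) = 0 := by
      rw [← LinearMap.lTensor_comp, rA.exact_ε.linearMap_comp_eq_zero, LinearMap.lTensor_zero]
    have comm_ε : LinearMap.lTensor Y rA.ε ∘ₗ LinearMap.lTensor Y (φ.f 0) =
        LinearMap.lTensor Y ι ∘ₗ LinearMap.lTensor Y rK.ε := by
      rw [← LinearMap.lTensor_comp, ← LinearMap.lTensor_comp, φ.comm_ε]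
    exact exact_coneMap_coprod (hA 0) (lTensor_exact Y rK.exact_ε rK.surjective_ε) hε hιY
      (comm 0) comm_ε
  · exact (Function.Exact.iff_of_ladder_linearEquiv
      (prodRight_comp_lTensor_coneMap Y _ _ _).symm
      (prodRight_comp_lTensor_coneMap Y _ _ _).symm).mp
      (exact_coneMap (hA (n + 1)) (hK n) (comm (n + 1)))

end Hom

end ProjRes

def retractOfRetraction {N M : ModuleCat.{u} R} (s : N →ₗ[R] M) (p : M →ₗ[R] N)
    (h : p ∘ₗ s = LinearMap.id) : Retract N M where
  i := ModuleCat.ofHom s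
  r := ModuleCat.ofHom p
  retract := by ext x; exact LinearMap.congr_fun h x

namespace TorAcyclic

variable {Y N : ModuleCat.{u} R}

theorem of_retract {M : ModuleCat.{u} R} (h : Retract N M) (hM : TorAcyclic Y M) :
    TorAcyclic Y N :=
  fun n => IsZero.of_mono (h.map ((Tor _ (n + 1)).obj Y)).i (hM n)

theorem of_retract_left {Y' : ModuleCat.{u} R} (h : Retract Y Y') (hY' : TorAcyclic Y' N) :
    TorAcyclic Y N :=
  fun n => IsZero.of_mono (h.map ((Tor _ (n + 1)).flip.obj N)).i (hY' n)

theorem finsupp (hN : TorAcyclic Y N) (κ : Type u) : TorAcyclic Y (ModuleCat.of R (κ →₀ N)) :=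
  let r := ProjRes.free N
  ((r.finsupp κ).tensorAcyclic_iff_torAcyclic Y).mp
    (((r.tensorAcyclic_iff_torAcyclic Y).mpr hN).finsupp κ)

theorem of_shortExact {K A : ModuleCat.{u} R} {ι : K →ₗ[R] A} {π : A →ₗ[R] N}
    (hι : Function.Injective ι) (hιπ : Function.Exact ι π) (hπ : Function.Surjective π)
    (hK : TorAcyclic Y K) (hA : TorAcyclic Y A)
    (hιY : Function.Injective (LinearMap.lTensor Y ι)) : TorAcyclic Y N := by
  let rK := ProjRes.free K
  let rA := ProjRes.free A
  obtain ⟨φ⟩ := rK.nonempty_hom rA ι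
  exact ((φ.cone π hι hιπ hπ).tensorAcyclic_iff_torAcyclic Y).mp <|
    φ.cone_tensorAcyclic π hι hιπ hπ ((rK.tensorAcyclic_iff_torAcyclic Y).mpr hK)
      ((rA.tensorAcyclic_iff_torAcyclic Y).mpr hA) hιY

theorem of_addClass {C A : ModuleCat.{u} R} (hC : TorProdOrthogonal C)
    (hY : ProdClass (charM C) Y) (hA : AddClass C A) : TorAcyclic Y A := by
  obtain ⟨I, s, p, hps⟩ := hY
  obtain ⟨κ, s', p', hps'⟩ := hA
  have hYC : TorAcyclic Y C := TorAcyclic.of_retract_left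
    (retractOfRetraction (M := ModuleCat.of R (I → CharacterModule C)) s p hps)
    fun n => hC I (n + 1) n.succ_pos
  exact (hYC.finsupp κ).of_retract
    (retractOfRetraction (M := ModuleCat.of R (κ →₀ C)) s' p' hps')

end TorAcyclic

namespace PGCFComplex

variable {C : ModuleCat.{u} R} (X : PGCFComplex C)

theorem lTensor_subtype_ker_dA {Y : ModuleCat.{u} R} (hY : ProdClass (charM C) Y) (n : ℕ) :
    Function.Injective (LinearMap.lTensor Y (LinearMap.ker (X.dA n)).subtype) ∧
      Function.Exact (LinearMap.lTensor Y (LinearMap.ker (X.dA n)).subtype)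
        (LinearMap.lTensor Y (X.dA n)) := by
  obtain ⟨-, h_mid, h_A0, h_A⟩ := X.tensor_exact Y hY
  match n with
  | 0 =>
    exact lTensor_subtype_ker_injective_and_exact Y X.exact_mid.linearMap_comp_eq_zero
      X.exact_A0 h_mid h_A0
  | 1 =>
    exact lTensor_subtype_ker_injective_and_exact Y X.exact_A0.linearMap_comp_eq_zero
      (X.exact_A 0) h_A0 (h_A 0)
  | k + 2 =>
    exact lTensor_subtype_ker_injective_and_exact Y (X.exact_A k).linearMap_comp_eq_zero
      (X.exact_A (k + 1)) (h_A k) (h_A (k + 1))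

def resolutionKerZero : ProjRes (ModuleCat.of R (LinearMap.ker (X.dA 0))) where
  Q := X.P
  projective := X.projP
  d := X.dP
  ε := X.mid.codRestrict _ X.exact_A0.apply_apply_eq_zero
  exact_d := X.exact_P
  exact_ε := X.exact_mid.codRestrict_ker
  surjective_ε := X.exact_A0.surjective_codRestrict_ker

theorem torAcyclic_ker (hC : TorProdOrthogonal C) {Y : ModuleCat.{u} R}
    (hY : ProdClass (charM C) Y) : ∀ n, TorAcyclic Y (ModuleCat.of R (LinearMap.ker (X.dA n)))
  | 0 => (X.resolutionKerZero.tensorAcyclic_iff_torAcyclic Y).mp (X.tensor_exact Y hY).1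
  | k + 1 => TorAcyclic.of_shortExact (Submodule.injective_subtype _)
      (LinearMap.exact_subtype_ker_map (X.dA k)).codRestrict_ker
      (X.exact_A k).surjective_codRestrict_ker (torAcyclic_ker hC hY k)
      (TorAcyclic.of_addClass hC hY (X.memA k)) (X.lTensor_subtype_ker_dA hY k).1

def splice (n : ℕ) (r : ProjRes (ModuleCat.of R (LinearMap.ker (X.dA n))))
    (hr : ∀ Y, ProdClass (charM C) Y → r.TensorAcyclic Y) : PGCFComplex C where
  P := r.Q
  A m := X.A (n + m)
  projP := r.projective
  memA m := X.memA (n + m)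
  dP := r.d
  mid := (LinearMap.ker (X.dA n)).subtype ∘ₗ r.ε
  dA m := X.dA (n + m)
  exact_P := r.exact_d
  exact_mid := (Submodule.injective_subtype _).comp_exact_iff_exact.mpr r.exact_ε
  exact_A0 := r.surjective_ε.comp_exact_iff_exact.mpr (LinearMap.exact_subtype_ker_map _)
  exact_A m := X.exact_A (n + m)
  tensor_exact Y hY := by
    obtain ⟨hinj, hexact⟩ := X.lTensor_subtype_ker_dA hY n
    refine ⟨hr Y hY, ?_, ?_, fun m => (X.tensor_exact Y hY).2.2.2 (n + m)⟩
    · rw [LinearMap.lTensor_comp]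
      exact hinj.comp_exact_iff_exact.mpr (lTensor_exact Y r.exact_ε r.surjective_ε)
    · rw [LinearMap.lTensor_comp]
      exact (LinearMap.lTensor_surjective Y r.surjective_ε).comp_exact_iff_exact.mpr hexact

end PGCFComplex

/-- If `C` is Tor-∏-orthogonal, then every kernel in the right half of a
totally acyclic complex as in the definition of `PG_CF` modules is itself a `PG_CF` module. -/
theorem statement10 (C : ModuleCat.{u} R) (hC : TorProdOrthogonal C)
    (X : PGCFComplex C) (n : ℕ) :
    IsPGCF C (ModuleCat.of R (LinearMap.ker (X.dA n))) := by
  let r := ProjRes.free (ModuleCat.of R (LinearMap.ker (X.dA n)))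
  have hr : ∀ Y, ProdClass (charM C) Y → r.TensorAcyclic Y := fun Y hY =>
    (r.tensorAcyclic_iff_torAcyclic Y).mpr (X.torAcyclic_ker hC hY n)
  exact ⟨X.splice n r hr, ⟨LinearEquiv.ofEq _ _ (X.splice n r hr).exact_A0.linearMap_ker_eq⟩⟩
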